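/- Upper bound for random hyperbolic Haar sums: if (ε_R) are independent Rademacher random variables indexed by the dyadic boxes R ⊆ [0,1)^d with |R| = 2^{-n}, then 𝔼 ‖Σ_{|R|=2^{-n}} ε_R h_R‖_∞ ≤ C_d n^{d/2} for a constant C_d depending only on d. -/

import Mathlib

open MeasureTheory Finset

noncomputable section

/-- The dyadic interval `[k/2^m, (k+1)/2^m)`. -/
def dyadI (m k : ℕ) : Set ℝ := Set.Ico ((k : ℝ) / 2 ^ m) (((k : ℝ) + 1) / 2 ^ m)

/-- The `L^∞`-normalized Haar function of the dyadic interval `dyadI m k`: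
`-1` on the left half, `+1` on the right half, `0` elsewhere. -/
def haar (m k : ℕ) : ℝ → ℝ :=
  (dyadI (m + 1) (2 * k + 1)).indicator (fun _ => (1 : ℝ))
    - (dyadI (m + 1) (2 * k)).indicator (fun _ => (1 : ℝ))

/-- The Haar function of the dyadic box with side lengths `2^{-r i}` and positions `k i`. -/
def haarBox {d : ℕ} (r k : Fin d → ℕ) : (Fin d → ℝ) → ℝ :=
  fun x => ∏ i, haar (r i) (k i) (x i)

/-- The unit cube `[0,1)^d`. -/
def unitCube (d : ℕ) : Set (Fin d → ℝ) := Set.univ.pi fun _ => Set.Ico (0 : ℝ) 1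

/-- Index set for positions of dyadic boxes of level vector `r`. -/
def boxIdx (d : ℕ) (r : Fin d → ℕ) : Finset (Fin d → ℕ) :=
  Fintype.piFinset fun i => Finset.range (2 ^ r i)

/-- The level vectors `r ∈ ℕ^d` with `|r| = r₁ + ⋯ + r_d = n`. -/
def levIdx (d n : ℕ) : Finset (Fin d → ℕ) :=
  (Fintype.piFinset fun _ : Fin d => Finset.range (n + 1)).filter fun r => ∑ i, r i = n

/-!
At a fixed point `x` the sum is a Rademacher sum, and for each level vector `r` at most one box
of shape `r` contains `x`; so its squared coefficients add up to at most
`#{r : |r| = n} ≤ (n + 1) ^ (d - 1)` and it is sub-Gaussian with that variance proxy.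
All Haar functions of level `|r| = n` are constant on the dyadic cubes of side `2^{-(n+1)}`, so the
supremum over `x` is a maximum over the `2^{(n+1)d}` corners of these cubes. The maximal
inequality `𝔼 max_{j ≤ N} |X_j| ≤ √(2 σ² log (2N))` for sub-Gaussian variables (Jensen for
`exp (t max_j |X_j|)`, then a union bound on the moment generating functions, then optimizing `t`)
gives `√(2 (n + 1) ^ (d - 1) ((n + 1) d + 1) log 2) ≲ n ^ (d / 2)`.
-/

lemma mem_dyadI_iff {m k : ℕ} {x : ℝ} : x ∈ dyadI m k ↔ 0 ≤ x ∧ ⌊x * 2 ^ m⌋₊ = k := by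
  have h2 : (0 : ℝ) < 2 ^ m := by positivity
  simp only [dyadI, Set.mem_Ico, div_le_iff₀ h2, lt_div_iff₀ h2]
  constructor
  · rintro ⟨hk, hk1⟩
    have hx : 0 ≤ x := nonneg_of_mul_nonneg_left ((Nat.cast_nonneg k).trans hk) h2
    exact ⟨hx, (Nat.floor_eq_iff (by positivity)).mpr ⟨hk, hk1⟩⟩
  · rintro ⟨hx, rfl⟩
    exact (Nat.floor_eq_iff (by positivity)).mp rfl

lemma floor_mul_two_pow_eq_div {m M : ℕ} (h : m ≤ M) (x : ℝ) :
    ⌊x * 2 ^ m⌋₊ = ⌊x * 2 ^ M⌋₊ / 2 ^ (M - m) := by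
  have hpow : (2 : ℝ) ^ M = 2 ^ m * 2 ^ (M - m) := by rw [← pow_add, Nat.add_sub_cancel' h]
  rw [← Nat.floor_div_natCast, hpow]
  push_cast
  rw [← mul_assoc, mul_div_cancel_right₀ _ (by positivity)]

lemma haar_eq_of_floor_eq {m M k : ℕ} (h : m + 1 ≤ M) {x y : ℝ} (hx : 0 ≤ x) (hy : 0 ≤ y)
    (hxy : ⌊x * 2 ^ M⌋₊ = ⌊y * 2 ^ M⌋₊) : haar m k x = haar m k y := by
  have hfloor : ⌊x * 2 ^ (m + 1)⌋₊ = ⌊y * 2 ^ (m + 1)⌋₊ := by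
    rw [floor_mul_two_pow_eq_div h x, floor_mul_two_pow_eq_div h y, hxy]
  simp only [haar, Pi.sub_apply, Set.indicator, mem_dyadI_iff, hx, hy, true_and, hfloor]

lemma mem_dyadI_of_haar_ne_zero {m k : ℕ} {x : ℝ} (h : haar m k x ≠ 0) : x ∈ dyadI m k := by
  have hparent : ∀ j, x ∈ dyadI (m + 1) j → j / 2 = k → x ∈ dyadI m k := by
    intro j hj hjk
    obtain ⟨hx, hj⟩ := mem_dyadI_iff.mp hj
    refine mem_dyadI_iff.mpr ⟨hx, ?_⟩
    rw [floor_mul_two_pow_eq_div (Nat.le_add_right m 1), hj, Nat.add_sub_cancel_left, pow_one, hjk]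
  by_cases h1 : x ∈ dyadI (m + 1) (2 * k + 1)
  · exact hparent _ h1 (by omega)
  by_cases h0 : x ∈ dyadI (m + 1) (2 * k)
  · exact hparent _ h0 (by omega)
  simp [haar, h0, h1] at h

lemma haar_eq_zero_of_notMem_Ico {m k : ℕ} (hk : k < 2 ^ m) {x : ℝ} (hx : x ∉ Set.Ico 0 1) :
    haar m k x = 0 := by
  by_contra h
  obtain ⟨hx0, hxk⟩ := mem_dyadI_iff.mp (mem_dyadI_of_haar_ne_zero h)
  have hlt : x * 2 ^ m < 1 * 2 ^ m := by
    have := (Nat.floor_lt (by positivity)).mp (hxk ▸ hk)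
    push_cast at this
    linarith
  exact hx ⟨hx0, lt_of_mul_lt_mul_right hlt (by positivity)⟩

lemma abs_haar_le_one (m k : ℕ) (x : ℝ) : |haar m k x| ≤ 1 := by
  by_cases h1 : x ∈ dyadI (m + 1) (2 * k + 1) <;> by_cases h0 : x ∈ dyadI (m + 1) (2 * k) <;>
    simp [haar, h0, h1]

lemma abs_haarBox_le_one {d : ℕ} (r k : Fin d → ℕ) (x : Fin d → ℝ) : |haarBox r k x| ≤ 1 := by
  rw [haarBox, Finset.abs_prod]
  exact Finset.prod_le_one (fun i _ => abs_nonneg _) (fun i _ => abs_haar_le_one _ _ _)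

lemma haarBox_eq_of_floor_eq {d M : ℕ} {r : Fin d → ℕ} (hr : ∀ i, r i + 1 ≤ M)
    (k : Fin d → ℕ) {x y : Fin d → ℝ} (hx : ∀ i, 0 ≤ x i) (hy : ∀ i, 0 ≤ y i)
    (hxy : ∀ i, ⌊x i * 2 ^ M⌋₊ = ⌊y i * 2 ^ M⌋₊) : haarBox r k x = haarBox r k y :=
  Finset.prod_congr rfl fun i _ => haar_eq_of_floor_eq (hr i) (hx i) (hy i) (hxy i)

lemma haarBox_eq_zero_of_notMem_unitCube {d : ℕ} {r k : Fin d → ℕ} (hk : k ∈ boxIdx d r)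
    {x : Fin d → ℝ} (hx : x ∉ unitCube d) : haarBox r k x = 0 := by
  rw [unitCube, Set.mem_univ_pi, not_forall] at hx
  obtain ⟨i, hi⟩ := hx
  exact Finset.prod_eq_zero (mem_univ i)
    (haar_eq_zero_of_notMem_Ico (mem_range.mp (Fintype.mem_piFinset.mp hk i)) hi)

lemma eq_of_haarBox_ne_zero {d : ℕ} {r k k' : Fin d → ℕ} {x : Fin d → ℝ}
    (h : haarBox r k x ≠ 0) (h' : haarBox r k' x ≠ 0) : k = k' := by
  rw [haarBox, Finset.prod_ne_zero_iff] at h h'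
  funext i
  rw [← (mem_dyadI_iff.mp (mem_dyadI_of_haar_ne_zero (h i (mem_univ i)))).2,
    ← (mem_dyadI_iff.mp (mem_dyadI_of_haar_ne_zero (h' i (mem_univ i)))).2]

lemma sum_sq_haarBox_le_one {d : ℕ} (r : Fin d → ℕ) (K : Finset (Fin d → ℕ)) (x : Fin d → ℝ) :
    ∑ k ∈ K, haarBox r k x ^ 2 ≤ 1 := by
  have hsupp : #(K.filter fun k => haarBox r k x ≠ 0) ≤ 1 :=
    Finset.card_le_one.mpr fun k hk k' hk' =>
      eq_of_haarBox_ne_zero (mem_filter.mp hk).2 (mem_filter.mp hk').2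
  calc ∑ k ∈ K, haarBox r k x ^ 2 = ∑ k ∈ K.filter fun k => haarBox r k x ≠ 0, haarBox r k x ^ 2 :=
        (Finset.sum_filter_ne_zero _).symm.trans (by simp)
    _ ≤ ∑ k ∈ K.filter fun k => haarBox r k x ≠ 0, 1 := by
        gcongr with k
        exact (sq_le_one_iff_abs_le_one _).mpr (abs_haarBox_le_one r k x)
    _ ≤ 1 := by simpa using hsupp

lemma le_of_mem_levIdx {d n : ℕ} {r : Fin d → ℕ} (hr : r ∈ levIdx d n) (i : Fin d) : r i ≤ n :=
  (mem_filter.mp hr).2 ▸ Finset.single_le_sum (fun j _ => Nat.zero_le (r j)) (mem_univ i)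

lemma card_levIdx_succ_le (d n : ℕ) : #(levIdx (d + 1) n) ≤ (n + 1) ^ d := by
  calc #(levIdx (d + 1) n)
      ≤ #(Fintype.piFinset fun _ : Fin d => range (n + 1)) := by
        refine Finset.card_le_card_of_injOn (fun r => r ∘ Fin.castSucc) ?_ ?_
        · intro r hr
          simp only [levIdx, coe_filter, Set.mem_ofPred_eq, Fintype.mem_piFinset] at hr
          simpa using fun i : Fin d => hr.1 (Fin.castSucc i)
        · intro r hr s hs hrs
          simp only [levIdx, coe_filter, Set.mem_ofPred_eq] at hr hs
          have hinit : ∀ i : Fin d, r i.castSucc = s i.castSucc := fun i => congrFun hrs i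
          have hsum := hr.2.trans hs.2.symm
          rw [Fin.sum_univ_castSucc, Fin.sum_univ_castSucc, Finset.sum_congr rfl fun i _ => hinit i]
            at hsum
          funext i
          exact Fin.lastCases (by omega) hinit i
    _ = (n + 1) ^ d := by simp

def hypHaarSum (d n : ℕ) (a : (Fin d → ℕ) × (Fin d → ℕ) → ℝ) (x : Fin d → ℝ) : ℝ :=
  ∑ r ∈ levIdx d n, ∑ k ∈ boxIdx d r, a (r, k) * haarBox r k x

def gridPt {d : ℕ} (M : ℕ) (j : Fin d → ℕ) : Fin d → ℝ := fun i => j i / 2 ^ M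

lemma hypHaarSum_eq_zero_of_notMem_unitCube {d n : ℕ} (a : (Fin d → ℕ) × (Fin d → ℕ) → ℝ)
    {x : Fin d → ℝ} (hx : x ∉ unitCube d) : hypHaarSum d n a x = 0 :=
  Finset.sum_eq_zero fun _ _ => Finset.sum_eq_zero fun _ hk => by
    rw [haarBox_eq_zero_of_notMem_unitCube hk hx, mul_zero]

lemma exists_hypHaarSum_eq_gridPt {d n : ℕ} (a : (Fin d → ℕ) × (Fin d → ℕ) → ℝ)
    {x : Fin d → ℝ} (hx : x ∈ unitCube d) :
    ∃ j ∈ boxIdx d (fun _ => n + 1), hypHaarSum d n a x = hypHaarSum d n a (gridPt (n + 1) j) := by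
  rw [unitCube, Set.mem_univ_pi] at hx
  have hpos : (0 : ℝ) < 2 ^ (n + 1) := by positivity
  refine ⟨fun i => ⌊x i * 2 ^ (n + 1)⌋₊, Fintype.mem_piFinset.mpr fun i => ?_, ?_⟩
  · rw [mem_range, Nat.floor_lt (by nlinarith [(hx i).1])]
    push_cast
    nlinarith [(hx i).2]
  · refine Finset.sum_congr rfl fun r hr => Finset.sum_congr rfl fun k _ => ?_
    congr 1
    refine haarBox_eq_of_floor_eq (fun i => Nat.succ_le_succ (le_of_mem_levIdx hr i)) k
      (fun i => (hx i).1) (fun i => by unfold gridPt; positivity) fun i => ?_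
    rw [gridPt, div_mul_cancel₀ _ hpos.ne', Nat.floor_natCast]

lemma abs_hypHaarSum_le_sup' {d n : ℕ} (a : (Fin d → ℕ) × (Fin d → ℕ) → ℝ)
    (hJ : (boxIdx d fun _ => n + 1).Nonempty) (x : Fin d → ℝ) :
    |hypHaarSum d n a x| ≤ (boxIdx d fun _ => n + 1).sup' hJ
      (fun j => |hypHaarSum d n a (gridPt (n + 1) j)|) := by
  by_cases hx : x ∈ unitCube d
  · obtain ⟨j, hj, hxj⟩ := exists_hypHaarSum_eq_gridPt a hx
    rw [hxj]
    exact Finset.le_sup' (fun j => |hypHaarSum d n a (gridPt (n + 1) j)|) hj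
  · obtain ⟨j, hj⟩ := hJ
    rw [hypHaarSum_eq_zero_of_notMem_unitCube a hx, abs_zero]
    exact (abs_nonneg _).trans (Finset.le_sup' (fun j => |hypHaarSum d n a (gridPt (n + 1) j)|) hj)

lemma hypHaarSum_eq_sum_sigma {d n : ℕ} (a : (Fin d → ℕ) × (Fin d → ℕ) → ℝ) (x : Fin d → ℝ) :
    hypHaarSum d n a x =
      ∑ p ∈ (levIdx d n).sigma (boxIdx d), haarBox p.1 p.2 x * a (p.1, p.2) := by
  rw [hypHaarSum, Finset.sum_sigma]
  simp only [mul_comm]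

lemma sum_sigma_sq_haarBox_le {d n : ℕ} (x : Fin d → ℝ) :
    ∑ p ∈ (levIdx d n).sigma (boxIdx d), haarBox p.1 p.2 x ^ 2 ≤ #(levIdx d n) := by
  rw [Finset.sum_sigma]
  simpa using Finset.sum_le_sum fun r (_ : r ∈ levIdx d n) => sum_sq_haarBox_le_one r (boxIdx d r) x

lemma card_boxIdx_const (d M : ℕ) : #(boxIdx d fun _ => M) = 2 ^ (M * d) := by
  simp [boxIdx, pow_mul]

open ProbabilityTheory NNReal

lemma Finset.aemeasurable_sup'_apply {α ι δ : Type*} [MeasurableSpace α] [MeasurableSpace δ]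
    [SemilatticeSup α] [MeasurableSup₂ α] {μ : Measure δ} {s : Finset ι} (hs : s.Nonempty)
    {f : ι → δ → α} (hf : ∀ i ∈ s, AEMeasurable (f i) μ) :
    AEMeasurable (fun x => s.sup' hs fun i => f i x) μ := by
  simp only [← Finset.sup'_apply]
  exact Finset.sup'_induction hs f (p := fun g => AEMeasurable g μ) (fun _ hf _ hg => hf.sup hg) hf

lemma le_sqrt_of_forall_mul_le_add {a c L : ℝ} (hc : 0 < c)
    (h : ∀ t, 0 < t → t * a ≤ L + c * t ^ 2 / 2) : a ≤ √(2 * c * L) := by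
  rcases le_or_gt a 0 with ha | ha
  · exact ha.trans (Real.sqrt_nonneg _)
  have hat := h (a / c) (by positivity)
  rw [Real.le_sqrt' ha]
  field_simp at hat
  nlinarith

lemma exp_mul_sup'_abs_le_sum {ι : Type*} {s : Finset ι} (hs : s.Nonempty) (x : ι → ℝ) {t : ℝ}
    (ht : 0 ≤ t) :
    Real.exp (t * s.sup' hs fun i => |x i|)
      ≤ ∑ i ∈ s, (Real.exp (t * x i) + Real.exp (-t * x i)) := by
  obtain ⟨i, hi, hmax⟩ := Finset.exists_mem_eq_sup' hs fun i => |x i|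
  calc Real.exp (t * s.sup' hs fun i => |x i|) = Real.exp |t * x i| := by
        rw [hmax, abs_mul, abs_of_nonneg ht]
    _ ≤ Real.exp (t * x i) + Real.exp (-t * x i) := by
        simpa [neg_mul] using Real.exp_abs_le (t * x i)
    _ ≤ _ := Finset.single_le_sum (f := fun i => Real.exp (t * x i) + Real.exp (-t * x i))
        (fun j _ => by positivity) hi

section Subgaussian

variable {Ω ι : Type*} [MeasurableSpace Ω] {μ : Measure Ω}

lemma ProbabilityTheory.HasSubgaussianMGF.mono {X : Ω → ℝ} {c c' : ℝ≥0}
    (h : HasSubgaussianMGF X c μ) (hc : c ≤ c') : HasSubgaussianMGF X c' μ :=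
  ⟨h.integrable_exp_mul, fun t => (h.mgf_le t).trans (Real.exp_le_exp.mpr (by gcongr))⟩

lemma hasSubgaussianMGF_sum_mul [IsProbabilityMeasure μ] {ε : ι → Ω → ℝ}
    (hindep : iIndepFun ε μ) (hε : ∀ i, HasSubgaussianMGF (ε i) 1 μ) (s : Finset ι) (a : ι → ℝ) :
    HasSubgaussianMGF (fun ω => ∑ i ∈ s, a i * ε i ω) (∑ i ∈ s, ‖a i‖₊ ^ 2) μ := by
  refine (HasSubgaussianMGF.sum_of_iIndepFun (s := s)
    (hindep.comp (fun i x => a i * x) fun i => measurable_const_mul (a i))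
    fun i _ => (hε i).const_mul (a i)).mono (Finset.sum_le_sum fun i _ => le_of_eq ?_)
  exact NNReal.eq (by change a i ^ 2 * 1 = _; simp)

variable {J : Finset ι} (hJ : J.Nonempty) {X : ι → Ω → ℝ} {c : ℝ≥0}

lemma integrable_sup'_abs (hX : ∀ j ∈ J, HasSubgaussianMGF (X j) c μ) :
    Integrable (fun ω => J.sup' hJ fun j => |X j ω|) μ := by
  refine Integrable.mono' (integrable_finsetSum J fun j hj => (hX j hj).integrable.abs)
    (Finset.aemeasurable_sup'_apply hJ fun j hj => (hX j hj).aemeasurable.abs).aestronglyMeasurable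
    (ae_of_all _ fun ω => ?_)
  obtain ⟨j, hj⟩ := hJ
  rw [Real.norm_of_nonneg ((abs_nonneg (X j ω)).trans (Finset.le_sup' (fun j => |X j ω|) hj))]
  exact Finset.sup'_le _ _ fun i hi =>
    Finset.single_le_sum (f := fun j => |X j ω|) (fun _ _ => abs_nonneg _) hi

lemma integrable_exp_mul_sup'_abs (hX : ∀ j ∈ J, HasSubgaussianMGF (X j) c μ) {t : ℝ}
    (ht : 0 ≤ t) : Integrable (fun ω => Real.exp (t * J.sup' hJ fun j => |X j ω|)) μ :=
  Integrable.mono' (integrable_finsetSum J fun j hj =>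
      ((hX j hj).integrable_exp_mul t).add ((hX j hj).integrable_exp_mul (-t)))
    ((integrable_sup'_abs hJ hX).aemeasurable.const_mul t).exp.aestronglyMeasurable
    (ae_of_all _ fun ω => by
      rw [Real.norm_of_nonneg (Real.exp_nonneg _)]
      exact exp_mul_sup'_abs_le_sum hJ (fun j => X j ω) ht)

lemma integral_exp_mul_sup'_abs_le (hX : ∀ j ∈ J, HasSubgaussianMGF (X j) c μ) {t : ℝ}
    (ht : 0 ≤ t) :
    ∫ ω, Real.exp (t * J.sup' hJ fun j => |X j ω|) ∂μ ≤ 2 * #J * Real.exp (c * t ^ 2 / 2) := by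
  have hint : ∀ j ∈ J, Integrable (fun ω => Real.exp (t * X j ω) + Real.exp (-t * X j ω)) μ :=
    fun j hj => ((hX j hj).integrable_exp_mul t).add ((hX j hj).integrable_exp_mul (-t))
  calc ∫ ω, Real.exp (t * J.sup' hJ fun j => |X j ω|) ∂μ
      ≤ ∫ ω, ∑ j ∈ J, (Real.exp (t * X j ω) + Real.exp (-t * X j ω)) ∂μ :=
        integral_mono (integrable_exp_mul_sup'_abs hJ hX ht) (integrable_finsetSum J hint)
          fun ω => exp_mul_sup'_abs_le_sum hJ (fun j => X j ω) ht
    _ = ∑ j ∈ J, (mgf (X j) μ t + mgf (X j) μ (-t)) := by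
        rw [integral_finsetSum J hint]
        exact Finset.sum_congr rfl fun j hj =>
          integral_add ((hX j hj).integrable_exp_mul t) ((hX j hj).integrable_exp_mul (-t))
    _ ≤ ∑ _j ∈ J, 2 * Real.exp (c * t ^ 2 / 2) := by
        refine Finset.sum_le_sum fun j hj => ?_
        have hneg := (hX j hj).mgf_le (-t)
        rw [neg_sq] at hneg
        linarith [(hX j hj).mgf_le t]
    _ = 2 * #J * Real.exp (c * t ^ 2 / 2) := by
        rw [Finset.sum_const, nsmul_eq_mul]
        ring

lemma integral_sup'_abs_le [IsProbabilityMeasure μ] (hc : 0 < c)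
    (hX : ∀ j ∈ J, HasSubgaussianMGF (X j) c μ) :
    ∫ ω, J.sup' hJ (fun j => |X j ω|) ∂μ ≤ √(2 * c * Real.log (2 * #J)) := by
  refine le_sqrt_of_forall_mul_le_add hc fun t ht => ?_
  have hjensen : Real.exp (t * ∫ ω, J.sup' hJ (fun j => |X j ω|) ∂μ)
      ≤ ∫ ω, Real.exp (t * J.sup' hJ fun j => |X j ω|) ∂μ := by
    rw [← integral_const_mul]
    exact convexOn_exp.map_integral_le Real.continuous_exp.continuousOn isClosed_univ
      (ae_of_all _ fun _ => Set.mem_univ _) ((integrable_sup'_abs hJ hX).const_mul t)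
      (integrable_exp_mul_sup'_abs hJ hX ht.le)
  have hcard : (0 : ℝ) < 2 * #J := by have := hJ.card_pos; positivity
  calc t * ∫ ω, J.sup' hJ (fun j => |X j ω|) ∂μ
      ≤ Real.log (2 * #J * Real.exp (c * t ^ 2 / 2)) := by
        rw [← Real.exp_le_exp, Real.exp_log (by positivity)]
        exact hjensen.trans (integral_exp_mul_sup'_abs_le hJ hX ht.le)
    _ = Real.log (2 * #J) + c * t ^ 2 / 2 := by
        rw [Real.log_mul hcard.ne' (Real.exp_pos _).ne', Real.log_exp]

end Subgaussian

section Rademacher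

variable {Ω : Type*} [MeasurableSpace Ω] {μ : Measure Ω} [IsProbabilityMeasure μ] {X : Ω → ℝ}

lemma ae_eq_one_or_eq_neg_one_of_rademacher (hX : Measurable X)
    (h1 : μ {ω | X ω = 1} = 1 / 2) (h2 : μ {ω | X ω = -1} = 1 / 2) :
    ∀ᵐ ω ∂μ, X ω = 1 ∨ X ω = -1 := by
  have hA : MeasurableSet {ω | X ω = 1} := hX (measurableSet_singleton _)
  have hB : MeasurableSet {ω | X ω = -1} := hX (measurableSet_singleton _)
  have hdisj : Disjoint {ω | X ω = 1} {ω | X ω = -1} :=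
    Set.disjoint_left.mpr fun ω (h : X ω = 1) (h' : X ω = -1) => by linarith
  rw [ae_iff]
  refine (prob_compl_eq_zero_iff (hA.union hB)).mpr ?_
  rw [measure_union hdisj hB, h1, h2, ENNReal.add_halves]

lemma integral_comp_of_rademacher (hX : Measurable X)
    (h1 : μ {ω | X ω = 1} = 1 / 2) (h2 : μ {ω | X ω = -1} = 1 / 2) (f : ℝ → ℝ) :
    ∫ ω, f (X ω) ∂μ = (f 1 + f (-1)) / 2 := by
  have hA : MeasurableSet {ω | X ω = 1} := hX (measurableSet_singleton _)
  have hB : MeasurableSet {ω | X ω = -1} := hX (measurableSet_singleton _)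
  have hae : (fun ω => f (X ω)) =ᵐ[μ]
      {ω | X ω = 1}.indicator (fun _ => f 1) + {ω | X ω = -1}.indicator (fun _ => f (-1)) := by
    filter_upwards [ae_eq_one_or_eq_neg_one_of_rademacher hX h1 h2] with ω hω
    rcases hω with h | h <;> norm_num [Set.indicator, h]
  rw [integral_congr_ae hae, integral_add' ((integrable_const _).indicator hA)
    ((integrable_const _).indicator hB), integral_indicator_const _ hA,
    integral_indicator_const _ hB, measureReal_def, measureReal_def, h1, h2]
  norm_num
  ring

lemma hasSubgaussianMGF_of_rademacher (hX : Measurable X)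
    (h1 : μ {ω | X ω = 1} = 1 / 2) (h2 : μ {ω | X ω = -1} = 1 / 2) :
    HasSubgaussianMGF X 1 μ where
  integrable_exp_mul _ := integrable_exp_mul_of_mem_Icc (a := -1) (b := 1) hX.aemeasurable
    ((ae_eq_one_or_eq_neg_one_of_rademacher hX h1 h2).mono fun ω h => by
      rcases h with h | h <;> norm_num [h])
  mgf_le t := by
    rw [mgf, integral_comp_of_rademacher hX h1 h2 (fun x => Real.exp (t * x)), mul_one, mul_neg_one,
      ← Real.cosh_eq, NNReal.coe_one, one_mul]
    exact Real.cosh_le_exp_half_sq t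

end Rademacher

lemma sqrt_two_mul_log_le (d : ℕ) {n : ℕ} (hn : 1 ≤ n) :
    √(2 * (n + 1) ^ d * Real.log (2 * 2 ^ ((n + 1) * (d + 1))))
      ≤ √((d + 2) * 2 ^ (d + 2)) * (n : ℝ) ^ (((d : ℝ) + 1) / 2) := by
  have hn' : (1 : ℝ) ≤ n := by exact_mod_cast hn
  have hlog : Real.log (2 * 2 ^ ((n + 1) * (d + 1))) ≤ (n + 1) * (d + 2) := by
    rw [← pow_succ', Real.log_pow]
    push_cast
    have hlog2 : Real.log 2 ≤ 1 := by linarith [Real.log_two_lt_d9]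
    nlinarith [mul_le_of_le_one_right (by positivity : (0 : ℝ) ≤ (n + 1) * (d + 1) + 1) hlog2]
  have hrpow : (n : ℝ) ^ (((d : ℝ) + 1) / 2) = √((n : ℝ) ^ (d + 1)) := by
    rw [Real.sqrt_eq_rpow, ← Real.rpow_natCast, ← Real.rpow_mul (by positivity)]
    push_cast
    ring_nf
  rw [hrpow, ← Real.sqrt_mul (by positivity)]
  refine Real.sqrt_le_sqrt ?_
  calc 2 * (n + 1) ^ d * Real.log (2 * 2 ^ ((n + 1) * (d + 1)))
      ≤ 2 * (d + 2) * ((n : ℝ) + 1) ^ (d + 1) := by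
        rw [pow_succ]
        nlinarith [pow_pos (by positivity : (0 : ℝ) < n + 1) d]
    _ ≤ 2 * (d + 2) * (2 * n) ^ (d + 1) := by gcongr; linarith
    _ = (d + 2) * 2 ^ (d + 2) * n ^ (d + 1) := by ring

open ProbabilityTheory in
/-- Upper bound for random hyperbolic Haar sums: if `(ε_R)` are independent Rademacher
random variables indexed by the dyadic boxes of volume `2^{-n}` in `[0,1)^d`, then
`𝔼 ‖Σ ε_R h_R‖_∞ ≤ C_d n^{d/2}`. -/
theorem stmt_17 (d : ℕ) (hd : 2 ≤ d) :
    ∃ C : ℝ, 0 < C ∧ ∀ n : ℕ, 1 ≤ n →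
      ∀ (Ω : Type) (mΩ : MeasurableSpace Ω) (μ : Measure Ω), IsProbabilityMeasure μ →
        ∀ ε : ((Fin d → ℕ) × (Fin d → ℕ)) → Ω → ℝ,
          (∀ p, Measurable (ε p)) →
          iIndepFun ε μ →
          (∀ p, μ {ω | ε p ω = 1} = 1 / 2 ∧ μ {ω | ε p ω = -1} = 1 / 2) →
          ∫ ω, (⨆ x : Fin d → ℝ,
              |∑ r ∈ levIdx d n, ∑ k ∈ boxIdx d r, ε (r, k) ω * haarBox r k x|) ∂μ
            ≤ C * (n : ℝ) ^ ((d : ℝ) / 2) := by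
  obtain ⟨d, rfl⟩ : ∃ d', d = d' + 1 := ⟨d - 1, by omega⟩
  refine ⟨√((d + 2) * 2 ^ (d + 2)), by positivity, fun n hn Ω _ μ _ ε hmeas hindep hrad => ?_⟩
  set J := boxIdx (d + 1) fun _ => n + 1
  have hJ : J.Nonempty := ⟨0, by simp [J, boxIdx]⟩
  have hsub : ∀ j ∈ J, HasSubgaussianMGF
      (fun ω => hypHaarSum (d + 1) n (ε · ω) (gridPt (n + 1) j)) ((n + 1) ^ d) μ := by
    intro j _
    simp only [hypHaarSum_eq_sum_sigma]
    refine (hasSubgaussianMGF_sum_mul (hindep.precomp (Equiv.sigmaEquivProd _ _).injective)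
      (fun p => hasSubgaussianMGF_of_rademacher (hmeas _) (hrad _).1 (hrad _).2) _ _).mono ?_
    rw [← NNReal.coe_le_coe]
    push_cast
    simp only [Real.norm_eq_abs, sq_abs]
    exact (sum_sigma_sq_haarBox_le _).trans (by exact_mod_cast card_levIdx_succ_le d n)
  calc ∫ ω, (⨆ x, |hypHaarSum (d + 1) n (ε · ω) x|) ∂μ
      ≤ ∫ ω, J.sup' hJ (fun j => |hypHaarSum (d + 1) n (ε · ω) (gridPt (n + 1) j)|) ∂μ :=
        integral_mono_of_nonneg (ae_of_all _ fun ω => Real.iSup_nonneg fun x => abs_nonneg _)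
          (integrable_sup'_abs hJ hsub)
          (ae_of_all _ fun ω => ciSup_le fun x => abs_hypHaarSum_le_sup' _ hJ x)
    _ ≤ √(2 * ((n + 1) ^ d : ℝ≥0) * Real.log (2 * #J)) :=
        integral_sup'_abs_le hJ (by positivity) hsub
    _ ≤ _ := by
        rw [card_boxIdx_const]
        push_cast
        exact sqrt_two_mul_log_le d hn
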